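/- arXiv:2103.05750 — 2 statements merged into one kernel-verified Lean document; each statement's English description precedes it below -/
import Mathlib

section
/- Projection drift bound: let β > 0, let θ̂, θ̄ ∈ ℝ^d with θ̄ ∈ E_β(θ̂), and let θ* ∈ Θ. Suppose θ^p minimizes θ ↦ ‖g_t(θ) − g_t(θ̂)‖_{V_t^{-2}} over the set {θ ∈ ℝ^d : Θ ∩ E_β(θ) ≠ ∅}. Then ‖g_t(θ^p) − g_t(θ̂)‖_{V_t^{-2}} ≤ ‖g_t(θ̄) − g_t(θ*)‖_{V_t^{-2}}. -/
open Finset Matrix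

noncomputable section

/-- Euclidean norm of a vector in `ℝ^d`. -/
def eucNorm {d : ℕ} (v : Fin d → ℝ) : ℝ := Real.sqrt (v ⬝ᵥ v)

/-- Norm ‖v‖_M = √(vᵀ M v) associated with a (positive definite) matrix M. -/
def mnorm {d : ℕ} (M : Matrix (Fin d) (Fin d) ℝ) (v : Fin d → ℝ) : ℝ :=
  Real.sqrt (v ⬝ᵥ M.mulVec v)

/-- The quasi-likelihood map g_t(θ) = Σ_{s=1}^{t-1} γ^{t-1-s} μ(⟨x_s,θ⟩) x_s + λ c_μ θ. -/
def gmap {d : ℕ} (t : ℕ) (γ lam cmu : ℝ) (μ : ℝ → ℝ) (x : ℕ → Fin d → ℝ)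
    (θ : Fin d → ℝ) : Fin d → ℝ :=
  (∑ s ∈ Finset.Icc 1 (t - 1), (γ ^ (t - 1 - s) * μ (x s ⬝ᵥ θ)) • x s) + (lam * cmu) • θ

/-- Weighted design matrix V_t = Σ_{s=1}^{t-1} γ^{t-1-s} x_s x_sᵀ + λ I_d. -/
def designV {d : ℕ} (t : ℕ) (γ lam : ℝ) (x : ℕ → Fin d → ℝ) : Matrix (Fin d) (Fin d) ℝ :=
  (∑ s ∈ Finset.Icc 1 (t - 1), (γ ^ (t - 1 - s)) • vecMulVec (x s) (x s))
    + lam • (1 : Matrix (Fin d) (Fin d) ℝ)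

/-- Weighted design matrix Ṽ_t = Σ_{s=1}^{t-1} γ^{2(t-1-s)} x_s x_sᵀ + λ I_d. -/
def designVtilde {d : ℕ} (t : ℕ) (γ lam : ℝ) (x : ℕ → Fin d → ℝ) : Matrix (Fin d) (Fin d) ℝ :=
  (∑ s ∈ Finset.Icc 1 (t - 1), (γ ^ (2 * (t - 1 - s))) • vecMulVec (x s) (x s))
    + lam • (1 : Matrix (Fin d) (Fin d) ℝ)

/-! The map `g_t` is the gradient of the strongly convex potential
`θ ↦ Σ_s γ^{t-1-s} M(⟨x_s, θ⟩) + (λ c_μ / 2) ‖θ‖²`, where `M` is a primitive of the monotone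
function `μ`; this potential minus any linear form is coercive, so its minimiser is a zero of the
shifted gradient and `g_t` is onto. Pick `θ_c` with `g_t(θ_c) = g_t(θ̂) + g_t(θ*) - g_t(θ̄)`:
then `g_t(θ*) - g_t(θ_c) = g_t(θ̄) - g_t(θ̂)`, so `θ* ∈ Θ ∩ E_β(θ_c)` and `θ_c` is feasible,
while its objective value `‖g_t(θ*) - g_t(θ̄)‖_{V_t^{-2}}` is the right-hand side. -/

open Filter

lemma mul_sub_le_intervalIntegral_of_monotone {f : ℝ → ℝ} (hf : Monotone f) (a b : ℝ) :
    f a * (b - a) ≤ ∫ u in a..b, f u := by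
  rcases le_total a b with hab | hba
  · calc f a * (b - a) = ∫ _ in a..b, f a := by simp [mul_comm]
      _ ≤ ∫ u in a..b, f u :=
        intervalIntegral.integral_mono_on hab intervalIntegrable_const hf.intervalIntegrable
          fun u hu => hf hu.1
  · have h : ∫ u in b..a, f u ≤ ∫ _ in b..a, f a :=
      intervalIntegral.integral_mono_on hba hf.intervalIntegrable intervalIntegrable_const
        fun u hu => hf hu.2
    rw [intervalIntegral.integral_const, smul_eq_mul] at h
    rw [intervalIntegral.integral_symm]
    linarith

section DotProduct

variable {ι : Type*} [Fintype ι]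

lemma dotProduct_self_nonneg (v : ι → ℝ) : 0 ≤ v ⬝ᵥ v :=
  Finset.sum_nonneg fun i _ => mul_self_nonneg (v i)

lemma sq_norm_le_dotProduct_self (θ : ι → ℝ) : ‖θ‖ ^ 2 ≤ θ ⬝ᵥ θ := by
  rw [← Real.le_sqrt (norm_nonneg _) (dotProduct_self_nonneg θ),
    pi_norm_le_iff_of_nonneg (Real.sqrt_nonneg _)]
  intro i
  rw [Real.le_sqrt (norm_nonneg _) (dotProduct_self_nonneg θ), Real.norm_eq_abs, sq_abs, sq]
  exact Finset.single_le_sum (f := fun j => θ j * θ j) (fun j _ => mul_self_nonneg _)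
    (Finset.mem_univ i)

lemma hasDerivAt_dotProduct_line (w θ v : ι → ℝ) (s : ℝ) :
    HasDerivAt (fun s : ℝ => w ⬝ᵥ (θ + s • v)) (w ⬝ᵥ v) s := by
  simp only [dotProduct_add, dotProduct_smul, smul_eq_mul]
  simpa using ((hasDerivAt_id s).mul_const (w ⬝ᵥ v)).const_add (w ⬝ᵥ θ)

lemma hasDerivAt_dotProduct_self_line (θ v : ι → ℝ) :
    HasDerivAt (fun s : ℝ => (θ + s • v) ⬝ᵥ (θ + s • v)) (2 * (θ ⬝ᵥ v)) 0 := by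
  have h : (fun s : ℝ => (θ + s • v) ⬝ᵥ (θ + s • v))
      = fun s => θ ⬝ᵥ θ + s * (2 * (θ ⬝ᵥ v)) + s ^ 2 * (v ⬝ᵥ v) := by
    funext s
    simp only [add_dotProduct, dotProduct_add, smul_dotProduct, dotProduct_smul, smul_eq_mul,
      dotProduct_comm v θ]
    ring
  rw [h]
  exact ((((hasDerivAt_id' (0 : ℝ)).mul_const (2 * (θ ⬝ᵥ v))).const_add (θ ⬝ᵥ θ)).fun_add
    ((hasDerivAt_pow 2 (0 : ℝ)).mul_const (v ⬝ᵥ v))).congr_deriv (by simp)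

lemma tendsto_cocompact_atTop_of_quadratic_le {Φ : (ι → ℝ) → ℝ} {a : ℝ} (ha : 0 < a)
    (z : ι → ℝ) (h : ∀ θ, a * (θ ⬝ᵥ θ) + z ⬝ᵥ θ ≤ Φ θ) :
    Tendsto Φ (cocompact (ι → ℝ)) atTop := by
  have hlow : ∀ θ : ι → ℝ, a / 2 * ‖θ‖ ^ 2 - z ⬝ᵥ z / (2 * a) ≤ Φ θ := by
    intro θ
    -- complete the square: `‖a θ + z‖² ≥ 0`
    have hsq : 0 ≤ (a • θ + z) ⬝ᵥ (a • θ + z) := dotProduct_self_nonneg _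
    have hlin : z ⬝ᵥ θ - (-(a / 2) * (θ ⬝ᵥ θ) - z ⬝ᵥ z / (2 * a))
        = (a • θ + z) ⬝ᵥ (a • θ + z) / (2 * a) := by
      simp only [add_dotProduct, dotProduct_add, smul_dotProduct, dotProduct_smul, smul_eq_mul,
        dotProduct_comm θ z]
      field_simp
      ring
    nlinarith [sq_norm_le_dotProduct_self θ, h θ, div_nonneg hsq (by positivity : 0 ≤ 2 * a)]
  refine tendsto_atTop_mono hlow ?_
  exact (tendsto_atTop_add_const_right _ _
    ((tendsto_pow_atTop two_ne_zero).const_mul_atTop (half_pos ha))).comp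
    tendsto_norm_cocompact_atTop

lemma exists_eq_zero_of_hasDerivAt_line {Φ : (ι → ℝ) → ℝ} {G : (ι → ℝ) → ι → ℝ}
    (hΦ : Continuous Φ) (hcoer : Tendsto Φ (cocompact (ι → ℝ)) atTop)
    (hG : ∀ θ v, HasDerivAt (fun s : ℝ => Φ (θ + s • v)) (G θ ⬝ᵥ v) 0) : ∃ θ, G θ = 0 := by
  obtain ⟨θ, hθ⟩ := hΦ.exists_forall_le hcoer
  have hmin : IsLocalMin (fun s : ℝ => Φ (θ + s • G θ)) 0 :=
    Eventually.of_forall fun s => by simpa using hθ (θ + s • G θ)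
  exact ⟨θ, dotProduct_self_eq_zero.1 (hmin.hasDerivAt_eq_zero (hG θ (G θ)))⟩

end DotProduct

section GLM

variable {ι α : Type*} [Fintype ι] (F : Finset α) (w : α → ℝ) (μ : ℝ → ℝ) (x : α → ι → ℝ)
  (c : ℝ)

def glmMap (θ : ι → ℝ) : ι → ℝ :=
  (∑ s ∈ F, (w s * μ (x s ⬝ᵥ θ)) • x s) + c • θ

def glmPotential (θ : ι → ℝ) : ℝ :=
  (∑ s ∈ F, w s * ∫ u in (0 : ℝ)..x s ⬝ᵥ θ, μ u) + c / 2 * (θ ⬝ᵥ θ)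

variable {F w μ x c}

lemma continuous_glmPotential (hμ : Monotone μ) : Continuous (glmPotential F w μ x c) := by
  have hprim := intervalIntegral.continuous_primitive (μ := MeasureTheory.volume)
    (fun _ _ => hμ.intervalIntegrable) 0
  unfold glmPotential
  fun_prop

lemma hasDerivAt_glmPotential_line (hμ : Continuous μ) (θ v : ι → ℝ) :
    HasDerivAt (fun s : ℝ => glmPotential F w μ x c (θ + s • v))
      (glmMap F w μ x c θ ⬝ᵥ v) 0 := by
  have hsum : HasDerivAt (fun s : ℝ => ∑ i ∈ F, w i * ∫ u in (0 : ℝ)..x i ⬝ᵥ (θ + s • v), μ u)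
      (∑ i ∈ F, w i * (μ (x i ⬝ᵥ θ) * (x i ⬝ᵥ v))) 0 :=
    HasDerivAt.fun_sum fun i _ => HasDerivAt.const_mul _ <|
      (hμ.integral_hasStrictDerivAt 0 _).hasDerivAt.comp_of_eq 0
        (hasDerivAt_dotProduct_line (x i) θ v 0) (by simp)
  refine (hsum.fun_add ((hasDerivAt_dotProduct_self_line θ v).const_mul (c / 2))).congr_deriv ?_
  simp only [glmMap, add_dotProduct, sum_dotProduct, smul_dotProduct, smul_eq_mul, mul_assoc]
  ring

lemma quadratic_le_glmPotential (hw : ∀ s ∈ F, 0 ≤ w s) (hμ : Monotone μ) (θ : ι → ℝ) :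
    c / 2 * (θ ⬝ᵥ θ) + (∑ s ∈ F, (w s * μ 0) • x s) ⬝ᵥ θ ≤ glmPotential F w μ x c θ := by
  have h : ∀ s ∈ F, (w s * μ 0) • x s ⬝ᵥ θ ≤ w s * ∫ u in (0 : ℝ)..x s ⬝ᵥ θ, μ u :=
    fun s hs => by
      rw [smul_dotProduct, smul_eq_mul, mul_assoc]
      exact mul_le_mul_of_nonneg_left
        (by simpa using mul_sub_le_intervalIntegral_of_monotone hμ 0 (x s ⬝ᵥ θ)) (hw s hs)
  rw [glmPotential, sum_dotProduct]
  linarith [Finset.sum_le_sum h]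

theorem glmMap_surjective (hw : ∀ s ∈ F, 0 ≤ w s) (hc : 0 < c) (hμc : Continuous μ)
    (hμ : Monotone μ) : Function.Surjective (glmMap F w μ x c) := by
  intro y
  obtain ⟨θ, hθ⟩ := exists_eq_zero_of_hasDerivAt_line
    (Φ := fun θ => glmPotential F w μ x c θ - y ⬝ᵥ θ) (G := fun θ => glmMap F w μ x c θ - y)
    ((continuous_glmPotential hμ).sub (continuous_const.dotProduct continuous_id))
    (tendsto_cocompact_atTop_of_quadratic_le (half_pos hc) (∑ s ∈ F, (w s * μ 0) • x s - y)
      fun θ => by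
        rw [sub_dotProduct]
        linarith [quadratic_le_glmPotential (x := x) (c := c) hw hμ θ])
    fun θ v => by
      simpa [sub_dotProduct] using
        (hasDerivAt_glmPotential_line hμc θ v).fun_sub (hasDerivAt_dotProduct_line y θ v 0)
  exact ⟨θ, sub_eq_zero.1 hθ⟩

end GLM

lemma mnorm_neg {d : ℕ} (M : Matrix (Fin d) (Fin d) ℝ) (v : Fin d → ℝ) :
    mnorm M (-v) = mnorm M v := by
  rw [mnorm, mnorm, mulVec_neg, neg_dotProduct, dotProduct_neg, neg_neg]

theorem stmt_5_general {d t : ℕ}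
    (S lam γ : ℝ) (hlam : 0 < lam)
    (hγ : γ ∈ Set.Ioo (0 : ℝ) 1)
    (x : ℕ → Fin d → ℝ)
    (μ : ℝ → ℝ) (hμc : ContDiff ℝ 1 μ) (hμm : StrictMono μ)
    (cmu : ℝ)
    (hcmupos : 0 < cmu)
    (β : ℝ)
    (θhat θbar θstar θp : Fin d → ℝ)
    (hbar : mnorm (designVtilde t γ lam x)⁻¹
      (gmap t γ lam cmu μ x θbar - gmap t γ lam cmu μ x θhat) ≤ β)
    (hstar : eucNorm θstar ≤ S)
    (hmin : ∀ θ : Fin d → ℝ,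
      (∃ θ' : Fin d → ℝ, eucNorm θ' ≤ S ∧
        mnorm (designVtilde t γ lam x)⁻¹
          (gmap t γ lam cmu μ x θ' - gmap t γ lam cmu μ x θ) ≤ β) →
      mnorm (designV t γ lam x * designV t γ lam x)⁻¹
          (gmap t γ lam cmu μ x θp - gmap t γ lam cmu μ x θhat)
        ≤ mnorm (designV t γ lam x * designV t γ lam x)⁻¹
            (gmap t γ lam cmu μ x θ - gmap t γ lam cmu μ x θhat)) :
    mnorm (designV t γ lam x * designV t γ lam x)⁻¹
        (gmap t γ lam cmu μ x θp - gmap t γ lam cmu μ x θhat)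
      ≤ mnorm (designV t γ lam x * designV t γ lam x)⁻¹
          (gmap t γ lam cmu μ x θbar - gmap t γ lam cmu μ x θstar) := by
  set g := gmap t γ lam cmu μ x
  have hg : Function.Surjective g :=
    glmMap_surjective (F := Finset.Icc 1 (t - 1)) (w := fun s => γ ^ (t - 1 - s))
      (fun s _ => pow_nonneg hγ.1.le (t - 1 - s)) (mul_pos hlam hcmupos)
      hμc.continuous hμm.monotone
  obtain ⟨θc, hθc⟩ := hg (g θhat + (g θstar - g θbar))
  have hfeas : mnorm (designVtilde t γ lam x)⁻¹ (g θstar - g θc) ≤ β := by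
    rwa [hθc, show g θstar - (g θhat + (g θstar - g θbar)) = g θbar - g θhat by abel]
  calc mnorm (designV t γ lam x * designV t γ lam x)⁻¹ (g θp - g θhat)
      ≤ mnorm (designV t γ lam x * designV t γ lam x)⁻¹ (g θc - g θhat) :=
        hmin θc ⟨θstar, hstar, hfeas⟩
    _ = mnorm (designV t γ lam x * designV t γ lam x)⁻¹ (g θbar - g θstar) := by
        rw [hθc, ← mnorm_neg]
        congr 1
        abel

/-- Projection drift bound. -/
theorem stmt_5 {d t : ℕ} (hd : 1 ≤ d) (ht : 2 ≤ t)
    (L S lam γ : ℝ) (hL : 0 < L) (hS : 0 < S) (hlam : 0 < lam)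
    (hγ : γ ∈ Set.Ioo (0 : ℝ) 1)
    (x : ℕ → Fin d → ℝ) (hx : ∀ s ∈ Finset.Icc 1 (t - 1), eucNorm (x s) ≤ L)
    (μ : ℝ → ℝ) (hμc : ContDiff ℝ 1 μ) (hμm : StrictMono μ)
    (kmu cmu : ℝ)
    (hkmu : kmu = sSup (deriv μ '' Set.Icc (-(L * S)) (L * S)))
    (hcmu : cmu = sInf (deriv μ '' Set.Icc (-(L * S)) (L * S)))
    (hcmupos : 0 < cmu)
    (β : ℝ) (hβ : 0 < β)
    (θhat θbar θstar θp : Fin d → ℝ)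
    (hbar : mnorm (designVtilde t γ lam x)⁻¹
      (gmap t γ lam cmu μ x θbar - gmap t γ lam cmu μ x θhat) ≤ β)
    (hstar : eucNorm θstar ≤ S)
    (hfeas : ∃ θ' : Fin d → ℝ, eucNorm θ' ≤ S ∧
      mnorm (designVtilde t γ lam x)⁻¹
        (gmap t γ lam cmu μ x θ' - gmap t γ lam cmu μ x θp) ≤ β)
    (hmin : ∀ θ : Fin d → ℝ,
      (∃ θ' : Fin d → ℝ, eucNorm θ' ≤ S ∧
        mnorm (designVtilde t γ lam x)⁻¹
          (gmap t γ lam cmu μ x θ' - gmap t γ lam cmu μ x θ) ≤ β) →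
      mnorm (designV t γ lam x * designV t γ lam x)⁻¹
          (gmap t γ lam cmu μ x θp - gmap t γ lam cmu μ x θhat)
        ≤ mnorm (designV t γ lam x * designV t γ lam x)⁻¹
            (gmap t γ lam cmu μ x θ - gmap t γ lam cmu μ x θhat)) :
    mnorm (designV t γ lam x * designV t γ lam x)⁻¹
        (gmap t γ lam cmu μ x θp - gmap t γ lam cmu μ x θhat)
      ≤ mnorm (designV t γ lam x * designV t γ lam x)⁻¹
          (gmap t γ lam cmu μ x θbar - gmap t γ lam cmu μ x θstar) :=
  stmt_5_general S lam γ hlam hγ x μ hμc hμm cmu hcmupos β θhat θbar θstar θp hbar hstar hmin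
end
end

section
/- Bound on the contribution of old observations to the tracking error: let θ*_1, …, θ*_t ∈ Θ, let α_1, …, α_{t-1} be reals with |α_s| ≤ k_μ for all s, and let D be an integer with 1 ≤ D ≤ t−1. Then ‖ Σ_{s=1}^{t−D−1} γ^{t-1-s} α_s x_s x_sᵀ (θ*_s − θ*_t) ‖_{V_t^{-2}} ≤ 2 k_μ S L² γ^D / (λ (1 − γ)). -/
/-!
Since `V_t = Σ γ^{t-1-s} x_s x_sᵀ + λ I` is symmetric with `V_t ⪰ λ I`, we have
`‖v‖_{V_t⁻²} = ‖V_t⁻¹ v‖ ≤ ‖v‖ / λ`. Each old term has Euclidean norm at most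
`γ^{t-1-s} k_μ L² · 2S`, and for `s ≤ t - D - 1` the exponents `t - 1 - s` are distinct and
`≥ D`, so the geometric tail gives `γ^D / (1 - γ)`.
-/

open Finset Matrix

noncomputable section

/-- Euclidean norm of a vector in `ℝ^d`. -/
def enormVec {d : ℕ} (v : Fin d → ℝ) : ℝ := Real.sqrt (v ⬝ᵥ v)

open WithLp

section enormVec

variable {d : ℕ}

lemma enormVec_eq_norm (v : Fin d → ℝ) : enormVec v = ‖toLp 2 v‖ := by
  simp [EuclideanSpace.norm_eq, enormVec, dotProduct, sq]

lemma enormVec_nonneg (v : Fin d → ℝ) : 0 ≤ enormVec v := Real.sqrt_nonneg _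

lemma dotProduct_self_eq_enormVec_sq (v : Fin d → ℝ) : v ⬝ᵥ v = enormVec v ^ 2 := by
  rw [enormVec_eq_norm, ← real_inner_self_eq_norm_sq, EuclideanSpace.inner_toLp_toLp]
  simp

lemma abs_dotProduct_le_enormVec_mul (v w : Fin d → ℝ) :
    |v ⬝ᵥ w| ≤ enormVec v * enormVec w := by
  rw [enormVec_eq_norm, enormVec_eq_norm, dotProduct_comm]
  simpa [EuclideanSpace.inner_toLp_toLp] using abs_real_inner_le_norm (toLp 2 v) (toLp 2 w)

lemma enormVec_smul (c : ℝ) (v : Fin d → ℝ) : enormVec (c • v) = |c| * enormVec v := by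
  rw [enormVec_eq_norm, enormVec_eq_norm, toLp_smul, norm_smul, Real.norm_eq_abs]

lemma enormVec_sub_le (v w : Fin d → ℝ) : enormVec (v - w) ≤ enormVec v + enormVec w := by
  simpa only [enormVec_eq_norm, toLp_sub] using norm_sub_le (toLp 2 v) (toLp 2 w)

lemma enormVec_sum_le {ι : Type*} (s : Finset ι) (f : ι → Fin d → ℝ) :
    enormVec (∑ i ∈ s, f i) ≤ ∑ i ∈ s, enormVec (f i) := by
  simpa only [enormVec_eq_norm, toLp_sum] using norm_sum_le s (fun i => toLp 2 (f i))

lemma enormVec_vecMulVec_self_mulVec_le (x u : Fin d → ℝ) :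
    enormVec (vecMulVec x x *ᵥ u) ≤ enormVec x ^ 2 * enormVec u := by
  rw [vecMulVec_mulVec, op_smul_eq_smul, enormVec_smul]
  calc |x ⬝ᵥ u| * enormVec x ≤ enormVec x * enormVec u * enormVec x :=
        mul_le_mul_of_nonneg_right (abs_dotProduct_le_enormVec_mul x u) (enormVec_nonneg x)
    _ = enormVec x ^ 2 * enormVec u := by ring

end enormVec

section matrix

variable {d : ℕ}

lemma mnorm_inv_mul_self {M : Matrix (Fin d) (Fin d) ℝ} (hM : M.IsHermitian) (v : Fin d → ℝ) :
    mnorm (M * M)⁻¹ v = enormVec (M⁻¹ *ᵥ v) := by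
  have hsymm : (M⁻¹)ᵀ = M⁻¹ := by
    simpa [Matrix.IsHermitian, conjTranspose_eq_transpose_of_trivial] using hM.inv
  rw [mnorm, enormVec, Matrix.mul_inv_rev, ← mulVec_mulVec, dotProduct_mulVec, ← vecMul_transpose,
    hsymm]

lemma mul_enormVec_le_enormVec_mulVec {M : Matrix (Fin d) (Fin d) ℝ} {lam : ℝ}
    (hM : ∀ w, lam * (w ⬝ᵥ w) ≤ w ⬝ᵥ M *ᵥ w) (w : Fin d → ℝ) :
    lam * enormVec w ≤ enormVec (M *ᵥ w) := by
  rcases (enormVec_nonneg w).eq_or_lt with hw | hw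
  · rw [← hw, mul_zero]
    exact enormVec_nonneg _
  · have h : lam * enormVec w * enormVec w ≤ enormVec (M *ᵥ w) * enormVec w :=
      calc lam * enormVec w * enormVec w = lam * (w ⬝ᵥ w) := by
            rw [dotProduct_self_eq_enormVec_sq]; ring
        _ ≤ w ⬝ᵥ M *ᵥ w := hM w
        _ ≤ enormVec (M *ᵥ w) * enormVec w := by
            rw [mul_comm]; exact (le_abs_self _).trans (abs_dotProduct_le_enormVec_mul _ _)
    exact le_of_mul_le_mul_right h hw

end matrix

section designV

variable {d : ℕ} (t : ℕ) {γ lam : ℝ} (x : ℕ → Fin d → ℝ)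

lemma posSemidef_sum_pow_smul_vecMulVec (hγ : 0 ≤ γ) :
    (∑ s ∈ Icc 1 (t - 1), γ ^ (t - 1 - s) • vecMulVec (x s) (x s)).PosSemidef :=
  posSemidef_sum _ fun s _ => by
    simpa using (posSemidef_vecMulVec_self_star (x s)).smul (pow_nonneg hγ (t - 1 - s))

lemma designV_posDef (hγ : 0 ≤ γ) (hlam : 0 < lam) : (designV t γ lam x).PosDef :=
  PosDef.posSemidef_add (posSemidef_sum_pow_smul_vecMulVec t x hγ) (PosDef.one.smul hlam)

lemma lam_mul_dotProduct_self_le_designV (hγ : 0 ≤ γ) (w : Fin d → ℝ) :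
    lam * (w ⬝ᵥ w) ≤ w ⬝ᵥ designV t γ lam x *ᵥ w := by
  have h := (posSemidef_sum_pow_smul_vecMulVec t x hγ).dotProduct_mulVec_nonneg w
  rw [star_trivial] at h
  rw [designV, add_mulVec, dotProduct_add, smul_mulVec, one_mulVec, dotProduct_smul, smul_eq_mul]
  linarith

lemma mnorm_designV_mul_self_inv_le (hγ : 0 ≤ γ) (hlam : 0 < lam) (v : Fin d → ℝ) :
    mnorm (designV t γ lam x * designV t γ lam x)⁻¹ v ≤ enormVec v / lam := by
  have hV := designV_posDef t x hγ hlam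
  rw [mnorm_inv_mul_self hV.isHermitian, le_div_iff₀ hlam, mul_comm]
  simpa [mulVec_mulVec, mul_nonsing_inv _ ((isUnit_iff_isUnit_det _).mp hV.isUnit)] using
    mul_enormVec_le_enormVec_mulVec (lam_mul_dotProduct_self_le_designV t (lam := lam) x hγ)
      ((designV t γ lam x)⁻¹ *ᵥ v)

end designV

lemma sum_Icc_pow_sub_le {γ : ℝ} (hγ0 : 0 ≤ γ) (hγ1 : γ < 1) (t D : ℕ) :
    ∑ s ∈ Icc 1 (t - D - 1), γ ^ (t - 1 - s) ≤ γ ^ D / (1 - γ) := by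
  by_cases hDt : D < t
  · have hreflect := sum_Ico_reflect (fun k => γ ^ k) 1 (m := t - D) (n := t - 1) (by omega)
    rw [show t - 1 + 1 - (t - D) = D by omega, show t - 1 + 1 - 1 = t - 1 by omega] at hreflect
    rw [← Finset.Ico_add_one_right_eq_Icc, show t - D - 1 + 1 = t - D by omega, hreflect]
    exact geom_sum_Ico_le_of_lt_one hγ0 hγ1
  · rw [show t - D - 1 = 0 by omega, Icc_eq_empty_of_lt zero_lt_one, sum_empty]
    have h1γ : 0 < 1 - γ := by linarith
    positivity

lemma enormVec_smul_vecMulVec_mulVec_sub_le {d : ℕ} {c k L S : ℝ} {x θ θ' : Fin d → ℝ}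
    (hc : |c| ≤ k) (hx : enormVec x ≤ L) (hθ : enormVec θ ≤ S) (hθ' : enormVec θ' ≤ S) :
    enormVec (c • vecMulVec x x *ᵥ (θ - θ')) ≤ k * L ^ 2 * (2 * S) := by
  have hx2 : enormVec x ^ 2 ≤ L ^ 2 := pow_le_pow_left₀ (enormVec_nonneg x) hx 2
  have hθθ' : enormVec (θ - θ') ≤ 2 * S := by linarith [enormVec_sub_le θ θ']
  have hθθ'_nonneg := enormVec_nonneg (θ - θ')
  have hk : 0 ≤ k := (abs_nonneg c).trans hc
  calc enormVec (c • vecMulVec x x *ᵥ (θ - θ'))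
      ≤ |c| * (enormVec x ^ 2 * enormVec (θ - θ')) := by
        rw [enormVec_smul]
        gcongr
        exact enormVec_vecMulVec_self_mulVec_le x _
    _ ≤ k * (L ^ 2 * (2 * S)) := by gcongr
    _ = k * L ^ 2 * (2 * S) := by ring

theorem enormVec_sum_old_terms_le {d t : ℕ} {S kmu γ L : ℝ} (hS : 0 ≤ S) (hkmu : 0 ≤ kmu)
    (hγ0 : 0 ≤ γ) (hγ1 : γ < 1)
    {x : ℕ → Fin d → ℝ} (hx : ∀ s ∈ Icc 1 (t - 1), enormVec (x s) ≤ L)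
    {θ : ℕ → Fin d → ℝ} (hθ : ∀ s ∈ Icc 1 t, enormVec (θ s) ≤ S)
    {α : ℕ → ℝ} (hα : ∀ s ∈ Icc 1 (t - 1), |α s| ≤ kmu) (D : ℕ) :
    enormVec (∑ s ∈ Icc 1 (t - D - 1),
        (γ ^ (t - 1 - s) * α s) • vecMulVec (x s) (x s) *ᵥ (θ s - θ t))
      ≤ 2 * kmu * S * L ^ 2 * (γ ^ D / (1 - γ)) := by
  have hterm : ∀ s ∈ Icc 1 (t - D - 1),
      enormVec ((γ ^ (t - 1 - s) * α s) • vecMulVec (x s) (x s) *ᵥ (θ s - θ t))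
        ≤ γ ^ (t - 1 - s) * kmu * L ^ 2 * (2 * S) := by
    intro s hs
    obtain ⟨hs1, hs2⟩ := mem_Icc.mp hs
    have hs' : s ∈ Icc 1 (t - 1) := mem_Icc.mpr ⟨hs1, by omega⟩
    have hst : s ∈ Icc 1 t := mem_Icc.mpr ⟨hs1, by omega⟩
    have ht : t ∈ Icc 1 t := mem_Icc.mpr ⟨by omega, le_rfl⟩
    refine enormVec_smul_vecMulVec_mulVec_sub_le ?_ (hx s hs') (hθ s hst) (hθ t ht)
    rw [abs_mul, abs_of_nonneg (pow_nonneg hγ0 _)]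
    exact mul_le_mul_of_nonneg_left (hα s hs') (pow_nonneg hγ0 _)
  calc _ ≤ ∑ s ∈ Icc 1 (t - D - 1), γ ^ (t - 1 - s) * kmu * L ^ 2 * (2 * S) :=
        (enormVec_sum_le _ _).trans (sum_le_sum hterm)
    _ = 2 * kmu * S * L ^ 2 * ∑ s ∈ Icc 1 (t - D - 1), γ ^ (t - 1 - s) := by
        rw [mul_sum]
        exact sum_congr rfl fun _ _ => by ring
    _ ≤ 2 * kmu * S * L ^ 2 * (γ ^ D / (1 - γ)) := by
        gcongr
        exact sum_Icc_pow_sub_le hγ0 hγ1 t D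

theorem stmt_15_general {d t : ℕ}
    (L S lam kmu γ : ℝ) (hS : 0 < S) (hlam : 0 < lam)
    (hkmu : 0 < kmu) (hγ : γ ∈ Set.Ioo (0 : ℝ) 1)
    (x : ℕ → Fin d → ℝ) (hx : ∀ s ∈ Finset.Icc 1 (t - 1), enormVec (x s) ≤ L)
    (θstar : ℕ → Fin d → ℝ) (hθstar : ∀ s ∈ Finset.Icc 1 t, enormVec (θstar s) ≤ S)
    (α : ℕ → ℝ) (hα : ∀ s ∈ Finset.Icc 1 (t - 1), |α s| ≤ kmu)
    (D : ℕ) :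
    mnorm (designV t γ lam x * designV t γ lam x)⁻¹
        (∑ s ∈ Finset.Icc 1 (t - D - 1),
          (γ ^ (t - 1 - s) * α s) • (vecMulVec (x s) (x s)).mulVec (θstar s - θstar t))
      ≤ 2 * kmu * S * L ^ 2 * γ ^ D / (lam * (1 - γ)) := by
  obtain ⟨hγ0, hγ1⟩ := hγ
  calc _ ≤ enormVec _ / lam := mnorm_designV_mul_self_inv_le t x hγ0.le hlam _
    _ ≤ 2 * kmu * S * L ^ 2 * (γ ^ D / (1 - γ)) / lam := by
        gcongr
        exact enormVec_sum_old_terms_le hS.le hkmu.le hγ0.le hγ1 hx hθstar hα D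
    _ = 2 * kmu * S * L ^ 2 * γ ^ D / (lam * (1 - γ)) := by
        field_simp

/-- Bound on the contribution of old observations to the tracking error. -/
theorem stmt_15 {d t : ℕ} (hd : 1 ≤ d) (ht : 2 ≤ t)
    (L S lam kmu γ : ℝ) (hL : 0 < L) (hS : 0 < S) (hlam : 0 < lam)
    (hkmu : 0 < kmu) (hγ : γ ∈ Set.Ioo (0 : ℝ) 1)
    (x : ℕ → Fin d → ℝ) (hx : ∀ s ∈ Finset.Icc 1 (t - 1), enormVec (x s) ≤ L)
    (θstar : ℕ → Fin d → ℝ) (hθstar : ∀ s ∈ Finset.Icc 1 t, enormVec (θstar s) ≤ S)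
    (α : ℕ → ℝ) (hα : ∀ s ∈ Finset.Icc 1 (t - 1), |α s| ≤ kmu)
    (D : ℕ) (hD1 : 1 ≤ D) (hD2 : D ≤ t - 1) :
    mnorm (designV t γ lam x * designV t γ lam x)⁻¹
        (∑ s ∈ Finset.Icc 1 (t - D - 1),
          (γ ^ (t - 1 - s) * α s) • (vecMulVec (x s) (x s)).mulVec (θstar s - θstar t))
      ≤ 2 * kmu * S * L ^ 2 * γ ^ D / (lam * (1 - γ)) :=
  stmt_15_general L S lam kmu γ hS hlam hkmu hγ x hx θstar hθstar α hα D
end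
end
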